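/- Let N ≥ 2, p ∈ [2,∞) with N + p > 4, and set b := −(N+p−4) < 0. Fix x₀ ∈ ℝ^N, 0 < r < R and real numbers m ≤ M, and define U(x) := ((M−m)/(R^b − r^b))·(|x−x₀|^b − r^b) + m. Then U is smooth on the ring B_R(x₀) \ closure(B_r(x₀)), satisfies D_p U(x) = 0 there, is nondecreasing in |x−x₀|, and has boundary values U = m on {|x−x₀| = r} and U = M on {|x−x₀| = R}. -/

import Mathlib

open MeasureTheory Metric Set
open scoped ENNReal NNReal Classical

noncomputable section

abbrev EucN (N : ℕ) := EuclideanSpace ℝ (Fin N)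

variable {N : ℕ}

/-- The quadratic form of the Hessian of `v` at `x` evaluated at `ξ`. -/
def hessQF (v : EucN N → ℝ) (x ξ : EucN N) : ℝ := iteratedFDeriv ℝ 2 v x ![ξ, ξ]

/-- The dominative p-Laplacian `D_p v (x) = Δv(x) + (p-2) λ_max (D²v(x))`. -/
def domLap (p : ℝ) (v : EucN N → ℝ) (x : EucN N) : ℝ :=
  (∑ i : Fin N, hessQF v x (EuclideanSpace.single i 1)) +
    (p - 2) * ⨆ ξ : sphere (0 : EucN N) 1, hessQF v x (ξ : EucN N)

/-! ### Auxiliary derivative lemmas -/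

lemma normsq_deriv (x₀ x : EucN N) :
    HasFDerivAt (fun y : EucN N => ‖y - x₀‖^2)
      (2 • (innerSL ℝ (x - x₀))) x := by
  have h : HasFDerivAt (fun y : EucN N => y - x₀)
      (ContinuousLinearMap.id ℝ (EucN N)) x :=
    (hasFDerivAt_id x).sub_const x₀
  simpa using h.norm_sq

lemma pow_deriv (x₀ x : EucN N) (hx : x ≠ x₀) (α : ℝ) :
    HasFDerivAt (fun y : EucN N => (‖y - x₀‖^2 : ℝ) ^ α)
      ((α * 2 * (‖x - x₀‖^2 : ℝ) ^ (α - 1)) • innerSL ℝ (x - x₀)) x := by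
  have hq : (0:ℝ) < ‖x - x₀‖^2 := by
    exact pow_pos (norm_pos_iff.mpr (sub_ne_zero.2 hx)) 2
  have hφ : HasDerivAt (fun t : ℝ => t ^ α) (α * (‖x - x₀‖^2 : ℝ) ^ (α - 1)) (‖x - x₀‖^2) := by
    simpa [mul_comm] using Real.hasDerivAt_rpow_const (x := (‖x - x₀‖^2 : ℝ)) (p := α)
      (Or.inl hq.ne')
  have := hφ.comp_hasFDerivAt x (normsq_deriv x₀ x)
  refine this.congr_fderiv ?_
  ext ξ
  simp [mul_assoc, mul_comm, mul_left_comm]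

def J (N : ℕ) : EucN N →L[ℝ] EucN N →L[ℝ] ℝ := innerSL ℝ

@[simp] lemma J_apply (u v : EucN N) : J N u v = inner ℝ u v := rfl

lemma U_deriv (x₀ x : EucN N) (hx : x ≠ x₀) (b c k : ℝ) :
    HasFDerivAt (fun y : EucN N => c * (‖y - x₀‖^2 : ℝ) ^ (b/2) + k)
      ((c * b * (‖x - x₀‖^2 : ℝ) ^ (b/2 - 1)) • innerSL ℝ (x - x₀)) x := by
  have h := ((pow_deriv x₀ x hx (b/2)).const_mul c).add_const k
  refine h.congr_fderiv ?_
  rw [smul_smul]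
  ring_nf

lemma D1_deriv (x₀ x : EucN N) (hx : x ≠ x₀) (a b : ℝ) :
    HasFDerivAt (fun y : EucN N =>
        (a * (‖y - x₀‖^2 : ℝ) ^ (b/2 - 1)) • innerSL ℝ (y - x₀))
      ((a * (‖x - x₀‖^2 : ℝ) ^ (b/2 - 1)) • J N
        + ((a * (b - 2) * (‖x - x₀‖^2 : ℝ) ^ (b/2 - 2)) • innerSL ℝ (x - x₀)).smulRight
            (innerSL ℝ (x - x₀))) x := by
  have hσ : HasFDerivAt (fun y : EucN N => a * (‖y - x₀‖^2 : ℝ) ^ (b/2 - 1))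
      ((a * (b - 2) * (‖x - x₀‖^2 : ℝ) ^ (b/2 - 2)) • innerSL ℝ (x - x₀)) x := by
    have h := (pow_deriv x₀ x hx (b/2 - 1)).const_mul a
    refine h.congr_fderiv ?_
    rw [smul_smul]
    ring_nf
  have hL : HasFDerivAt (fun y : EucN N => innerSL ℝ (y - x₀)) (J N) x := by
    have h : HasFDerivAt (fun y : EucN N => y - x₀)
        (ContinuousLinearMap.id ℝ (EucN N)) x :=
      (hasFDerivAt_id x).sub_const x₀
    exact ((J N).hasFDerivAt).comp x h
  exact hσ.smul hL

/-- The Hessian quadratic form of the radial power function. -/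
lemma hess_formula (x₀ x : EucN N) (hx : x ≠ x₀) (b c k : ℝ) (ξ : EucN N) :
    hessQF (fun y : EucN N => c * (‖y - x₀‖^2 : ℝ) ^ (b/2) + k) x ξ =
      (c * b * (‖x - x₀‖^2 : ℝ) ^ (b/2 - 1)) * ‖ξ‖^2
        + (c * b * (b - 2) * (‖x - x₀‖^2 : ℝ) ^ (b/2 - 2)) * (inner ℝ (x - x₀) ξ : ℝ)^2 := by
  set Ufun : EucN N → ℝ := fun y => c * (‖y - x₀‖^2 : ℝ) ^ (b/2) + k with hUfun
  set D1 : EucN N → (EucN N →L[ℝ] ℝ) :=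
    fun y => (c * b * (‖y - x₀‖^2 : ℝ) ^ (b/2 - 1)) • innerSL ℝ (y - x₀) with hD1
  have hev : fderiv ℝ Ufun =ᶠ[nhds x] D1 := by
    filter_upwards [compl_singleton_mem_nhds hx] with y hy
    exact (U_deriv x₀ y hy b c k).fderiv
  have h2 : fderiv ℝ (fderiv ℝ Ufun) x = fderiv ℝ D1 x := hev.fderiv_eq
  have h3 : fderiv ℝ D1 x =
      (c * b * (‖x - x₀‖^2 : ℝ) ^ (b/2 - 1)) • J N
        + ((c * b * (b - 2) * (‖x - x₀‖^2 : ℝ) ^ (b/2 - 2)) • innerSL ℝ (x - x₀)).smulRight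
            (innerSL ℝ (x - x₀)) := (D1_deriv x₀ x hx (c * b) b).fderiv
  show iteratedFDeriv ℝ 2 Ufun x ![ξ, ξ] = _
  rw [iteratedFDeriv_two_apply]
  simp only [Matrix.cons_val_zero, Matrix.cons_val_one, Matrix.head_cons]
  rw [h2, h3]
  simp only [ContinuousLinearMap.add_apply, ContinuousLinearMap.coe_smul',
    Pi.smul_apply, ContinuousLinearMap.smulRight_apply, ContinuousLinearMap.smul_apply,
    J_apply, innerSL_apply_apply, smul_eq_mul]
  rw [real_inner_self_eq_norm_sq]
  ring

/-- A unit vector orthogonal to a given vector, in dimension at least 2. -/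
lemma exists_unit_orthogonal (hN : 2 ≤ N) (v : EucN N) (hv : v ≠ 0) :
    ∃ ξ : EucN N, ‖ξ‖ = 1 ∧ (inner ℝ v ξ : ℝ) = 0 := by
  have hdim : Module.finrank ℝ (ℝ ∙ v) + Module.finrank ℝ ((ℝ ∙ v)ᗮ)
      = Module.finrank ℝ (EucN N) := Submodule.finrank_add_finrank_orthogonal _
  rw [finrank_span_singleton hv, finrank_euclideanSpace_fin] at hdim
  have hpos : 0 < Module.finrank ℝ ((ℝ ∙ v)ᗮ) := by omega
  obtain ⟨w, hw⟩ := Module.finrank_pos_iff_exists_ne_zero.mp hpos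
  have hw0 : (w : EucN N) ≠ 0 := fun h => hw (Subtype.ext h)
  refine ⟨‖(w : EucN N)‖⁻¹ • (w : EucN N), ?_, ?_⟩
  · rw [norm_smul, norm_inv, norm_norm, inv_mul_cancel₀ (norm_ne_zero_iff.mpr hw0)]
  · rw [real_inner_smul_right]
    have : (inner ℝ v (w : EucN N) : ℝ) = 0 := by
      have := w.2
      rw [Submodule.mem_orthogonal] at this
      exact this v (Submodule.mem_span_singleton_self v)
    rw [this, mul_zero]

lemma rpow_sq_half (t b : ℝ) (ht : 0 ≤ t) : (t^2 : ℝ) ^ (b/2) = t ^ b := by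
  rw [← Real.rpow_natCast t 2, ← Real.rpow_mul ht]
  congr 1
  ring

/-- the radial barrier `U(x) = (M−m)/(R^b − r^b) · (|x−x₀|^b − r^b) + m`,
`b = −(N+p−4) < 0`, is smooth on the ring `B_R(x₀) \ closure(B_r(x₀))`, solves
`D_p U = 0` there, is nondecreasing in `|x−x₀|`, and takes the boundary values `m`
on `{|x−x₀| = r}` and `M` on `{|x−x₀| = R}`. -/
theorem radial_barrier (hN : 2 ≤ N) (p : ℝ) (hp : 2 ≤ p) (hNp : 4 < (N : ℝ) + p)
    (b : ℝ) (hb : b = -((N : ℝ) + p - 4))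
    (x₀ : EucN N) (r R m M : ℝ) (hr : 0 < r) (hrR : r < R) (hmM : m ≤ M)
    (U : EucN N → ℝ)
    (hU : ∀ x, U x = ((M - m) / (R ^ b - r ^ b)) * (dist x x₀ ^ b - r ^ b) + m) :
    ContDiffOn ℝ (⊤ : ℕ∞) U (ball x₀ R \ closedBall x₀ r) ∧
    (∀ x ∈ ball x₀ R \ closedBall x₀ r, domLap p U x = 0) ∧
    (∀ x ∈ ball x₀ R \ closedBall x₀ r, ∀ y ∈ ball x₀ R \ closedBall x₀ r,
      dist x x₀ ≤ dist y x₀ → U x ≤ U y) ∧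
    (∀ x : EucN N, dist x x₀ = r → U x = m) ∧
    (∀ x : EucN N, dist x x₀ = R → U x = M) := by
  have hb0 : b < 0 := by rw [hb]; linarith
  set c : ℝ := (M - m) / (R ^ b - r ^ b) with hcdef
  have hRb : R ^ b < r ^ b := Real.rpow_lt_rpow_of_neg hr hrR hb0
  have hden : R ^ b - r ^ b < 0 := by linarith
  have hc : c ≤ 0 := div_nonpos_of_nonneg_of_nonpos (by linarith) hden.le
  -- the rewritten form of U
  have hUeq : U = fun y : EucN N => c * (‖y - x₀‖^2 : ℝ) ^ (b/2) + (m - c * r ^ b) := by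
    funext y
    rw [hU y, dist_eq_norm, rpow_sq_half _ _ (norm_nonneg _)]
    ring
  -- membership facts
  have hmem : ∀ x ∈ ball x₀ R \ closedBall x₀ r, r < ‖x - x₀‖ ∧ x ≠ x₀ := by
    intro x hx
    have h1 : r < dist x x₀ := lt_of_not_ge (fun h => hx.2 (mem_closedBall.mpr h))
    rw [dist_eq_norm] at h1
    refine ⟨h1, fun h => ?_⟩
    rw [h, sub_self, norm_zero] at h1; linarith
  refine ⟨?_, ?_, ?_, ?_, ?_⟩
  · -- smoothness
    intro x hx
    obtain ⟨h1, hxne⟩ := hmem x hx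
    have hq : (0:ℝ) < ‖x - x₀‖^2 := pow_pos (by linarith) 2
    have hqc : ContDiffAt ℝ (⊤ : ℕ∞) (fun y : EucN N => (‖y - x₀‖^2 : ℝ)) x :=
      ((contDiff_norm_sq ℝ).comp (contDiff_id.sub contDiff_const)).contDiffAt
    have hrc : ContDiffAt ℝ (⊤ : ℕ∞) (fun t : ℝ => t ^ (b/2)) (‖x - x₀‖^2) :=
      Real.contDiffAt_rpow_const_of_ne hq.ne'
    have : ContDiffAt ℝ (⊤ : ℕ∞) U x := by
      rw [hUeq]
      exact (contDiffAt_const.mul (hrc.comp x hqc)).add contDiffAt_const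
    exact this.contDiffWithinAt
  · -- the PDE
    intro x hx
    obtain ⟨h1, hxne⟩ := hmem x hx
    set v : EucN N := x - x₀ with hv
    have hv0 : v ≠ 0 := sub_ne_zero.2 hxne
    set s : ℝ := ‖v‖^2 with hs
    have hspos : (0:ℝ) < s := pow_pos (norm_pos_iff.mpr hv0) 2
    set A : ℝ := c * b * s ^ (b/2 - 1) with hA
    set B : ℝ := c * b * (b - 2) * s ^ (b/2 - 2) with hB
    have hkey : ∀ ξ : EucN N, hessQF U x ξ = A * ‖ξ‖^2 + B * (inner ℝ v ξ : ℝ)^2 := by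
      intro ξ
      rw [hUeq]
      exact hess_formula x₀ x hxne b c (m - c * r ^ b) ξ
    have hcb : 0 ≤ c * b := by nlinarith
    have hA0 : 0 ≤ A := mul_nonneg hcb (Real.rpow_nonneg hspos.le _)
    have hB0 : B ≤ 0 := by
      have : c * b * (b - 2) ≤ 0 := mul_nonpos_of_nonneg_of_nonpos hcb (by linarith)
      exact mul_nonpos_of_nonpos_of_nonneg this (Real.rpow_nonneg hspos.le _)
    -- the sum term
    have hsum : (∑ i : Fin N, hessQF U x (EuclideanSpace.single i 1)) = N * A + B * s := by
      have h1 : ∀ i : Fin N, hessQF U x (EuclideanSpace.single i 1) = A + B * (v i)^2 := by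
        intro i
        rw [hkey]
        have h2 : (inner ℝ v (EuclideanSpace.single i (1:ℝ)) : ℝ) = v i := by
          rw [EuclideanSpace.inner_single_right]; simp
        rw [h2, EuclideanSpace.norm_single]
        norm_num
      have h3 : ∑ i : Fin N, (v i)^2 = s := by
        have h4 : (inner ℝ v v : ℝ) = ∑ i : Fin N, v i * v i := by
          rw [PiLp.inner_apply]; simp [RCLike.inner_apply, sq]
        have h5 : (inner ℝ v v : ℝ) = s := real_inner_self_eq_norm_sq v
        rw [← h5, h4]
        exact Finset.sum_congr rfl (fun i _ => by ring)
      rw [Finset.sum_congr rfl (fun i _ => h1 i), Finset.sum_add_distrib,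
        Finset.sum_const, Finset.card_univ, Fintype.card_fin, nsmul_eq_mul,
        ← Finset.mul_sum, h3]
    -- the sup term
    have hne : Nonempty (sphere (0 : EucN N) 1) := by
      refine ⟨⟨EuclideanSpace.single (⟨0, by omega⟩ : Fin N) (1:ℝ), ?_⟩⟩
      rw [mem_sphere_zero_iff_norm, EuclideanSpace.norm_single]
      norm_num
    have hbound : ∀ ξ : sphere (0 : EucN N) 1, hessQF U x (ξ : EucN N) ≤ A := by
      intro ξ
      have hξ : ‖(ξ : EucN N)‖ = 1 := norm_eq_of_mem_sphere ξ
      rw [hkey, hξ]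
      have : B * (inner ℝ v (ξ : EucN N) : ℝ)^2 ≤ 0 :=
        mul_nonpos_of_nonpos_of_nonneg hB0 (sq_nonneg _)
      nlinarith
    have hsup : (⨆ ξ : sphere (0 : EucN N) 1, hessQF U x (ξ : EucN N)) = A := by
      obtain ⟨ξ₀, hξ₀n, hξ₀o⟩ := exists_unit_orthogonal hN v hv0
      have hξ₀mem : ξ₀ ∈ sphere (0 : EucN N) 1 := by
        rw [mem_sphere_zero_iff_norm]; exact hξ₀n
      have hval : hessQF U x ξ₀ = A := by
        rw [hkey, hξ₀n, hξ₀o]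
        norm_num
      refine le_antisymm (ciSup_le hbound) ?_
      refine le_ciSup_of_le ⟨A, ?_⟩ (⟨ξ₀, hξ₀mem⟩ : sphere (0 : EucN N) 1) (le_of_eq hval.symm)
      rintro _ ⟨ξ, rfl⟩
      exact hbound ξ
    rw [domLap, hsum, hsup]
    have hBs : B * s = c * b * (b - 2) * s ^ (b/2 - 1) := by
      have hss : s ^ (b/2 - 2) * s = s ^ (b/2 - 1) := by
        rw [← Real.rpow_add_one hspos.ne' (b/2 - 2)]
        congr 1
        ring
      rw [hB, mul_assoc, hss]
    have hzero : (N:ℝ) + p + b - 4 = 0 := by rw [hb]; ring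
    rw [hBs, hA]
    linear_combination (c * b * s ^ (b/2 - 1)) * hzero
  · -- monotonicity
    intro x hx y hy hxy
    obtain ⟨h1x, _⟩ := hmem x hx
    obtain ⟨h1y, _⟩ := hmem y hy
    rw [hU x, hU y]
    have hdx : 0 < dist x x₀ := by rw [dist_eq_norm]; linarith
    have hpow : dist y x₀ ^ b ≤ dist x x₀ ^ b := by
      rcases eq_or_lt_of_le hxy with h | h
      · rw [h]
      · exact (Real.rpow_lt_rpow_of_neg hdx h hb0).le
    have := mul_le_mul_of_nonpos_left (sub_le_sub_right hpow (r ^ b)) hc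
    linarith
  · -- inner boundary
    intro x hxr
    rw [hU x, hxr, sub_self, mul_zero, zero_add]
  · -- outer boundary
    intro x hxR
    rw [hU x, hxR]
    have h6 : (M - m) / (R ^ b - r ^ b) * (R ^ b - r ^ b) = M - m :=
      div_mul_cancel₀ _ hden.ne
    have h7 : c = (M - m) / (R ^ b - r ^ b) := hcdef
    nlinarith [h6, h7]

end
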